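/- Suppose β ≥ 0 and P01p, P11p, P01a, P11a ∈ [0,1]. Then for every horizon T ∈ ℕ, every b ∈ [0,1], and all reals m ≤ m′: 0 ≤ V m′ T b − V m T b ≤ (m′ − m)·(∑_{t=0}^{T−1} β^t). -/

import Mathlib

/-! Raising the subsidy by `m' - m` raises the passive branch of the Bellman recursion by
`m' - m` plus `β` times the increase of the continuation value, and the active branch by `β`
times a convex combination of such increases. Since `max` preserves a common two-sided bound on
increments, induction on `T` keeps the increase of `V` in `[0, (m' - m) S_T]`, where
`S_T = ∑_{t<T} β^t` satisfies `S_{T+1} = 1 + β S_T`. -/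

noncomputable def V (β m p01p p11p p01a p11a : ℝ) : ℕ → ℝ → ℝ
  | 0, b => b
  | T + 1, b =>
      max (b + m + β * V β m p01p p11p p01a p11a T (b * p11p + (1 - b) * p01p))
          (b + β * (b * V β m p01p p11p p01a p11a T p11a
                    + (1 - b) * V β m p01p p11p p01a p11a T p01a))

noncomputable def Vp (β m p01p p11p p01a p11a : ℝ) (T : ℕ) (b : ℝ) : ℝ :=
  b + m + β * V β m p01p p11p p01a p11a (T - 1) (b * p11p + (1 - b) * p01p)

noncomputable def Va (β m p01p p11p p01a p11a : ℝ) (T : ℕ) (b : ℝ) : ℝ :=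
  b + β * (b * V β m p01p p11p p01a p11a (T - 1) p11a
           + (1 - b) * V β m p01p p11p p01a p11a (T - 1) p01a)

open Finset

theorem max_sub_max_mem_Icc {α : Type*} [AddCommGroup α] [LinearOrder α] [IsOrderedAddMonoid α]
    {a a' c c' d : α} (ha : a' - a ∈ Set.Icc 0 d) (hc : c' - c ∈ Set.Icc 0 d) :
    max a' c' - max a c ∈ Set.Icc 0 d := by
  obtain ⟨ha₀, had⟩ := ha
  obtain ⟨hc₀, hcd⟩ := hc
  rw [sub_nonneg] at ha₀ hc₀
  rw [sub_le_iff_le_add'] at had hcd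
  refine ⟨sub_nonneg.2 (max_le_max ha₀ hc₀), sub_le_iff_le_add'.2 ?_⟩
  rw [← max_add_add_right]
  exact max_le_max had hcd

theorem mul_add_one_sub_mul_mem_Icc {𝕜 : Type*} [Ring 𝕜] [LinearOrder 𝕜] [IsStrictOrderedRing 𝕜]
    {b x y l u : 𝕜} (hb : b ∈ Set.Icc 0 1) (hx : x ∈ Set.Icc l u) (hy : y ∈ Set.Icc l u) :
    b * x + (1 - b) * y ∈ Set.Icc l u := by
  simpa only [smul_eq_mul] using
    convex_Icc l u hx hy hb.1 (sub_nonneg.2 hb.2) (add_sub_cancel b 1)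

section ValueFunction

variable (β p01p p11p p01a p11a : ℝ)

theorem V_succ (m : ℝ) (T : ℕ) (b : ℝ) :
    V β m p01p p11p p01a p11a (T + 1) b =
      max (Vp β m p01p p11p p01a p11a (T + 1) b) (Va β m p01p p11p p01a p11a (T + 1) b) :=
  rfl

theorem Vp_sub_Vp (m m' : ℝ) (T : ℕ) (b : ℝ) :
    Vp β m' p01p p11p p01a p11a (T + 1) b - Vp β m p01p p11p p01a p11a (T + 1) b =
      (m' - m) + β * (V β m' p01p p11p p01a p11a T (b * p11p + (1 - b) * p01p)
        - V β m p01p p11p p01a p11a T (b * p11p + (1 - b) * p01p)) := by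
  simp only [Vp, Nat.add_sub_cancel]
  ring

theorem Va_sub_Va (m m' : ℝ) (T : ℕ) (b : ℝ) :
    Va β m' p01p p11p p01a p11a (T + 1) b - Va β m p01p p11p p01a p11a (T + 1) b =
      β * (b * (V β m' p01p p11p p01a p11a T p11a - V β m p01p p11p p01a p11a T p11a)
        + (1 - b) * (V β m' p01p p11p p01a p11a T p01a - V β m p01p p11p p01a p11a T p01a)) := by
  simp only [Va, Nat.add_sub_cancel]
  ring

variable {β p01p p11p p01a p11a}

theorem V_sub_V_mem_Icc (hβ : 0 ≤ β) (h01p : p01p ∈ Set.Icc 0 1) (h11p : p11p ∈ Set.Icc 0 1)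
    (h01a : p01a ∈ Set.Icc 0 1) (h11a : p11a ∈ Set.Icc 0 1) {m m' : ℝ} (hm : m ≤ m') (T : ℕ) :
    ∀ b ∈ Set.Icc (0 : ℝ) 1, V β m' p01p p11p p01a p11a T b - V β m p01p p11p p01a p11a T b ∈
      Set.Icc 0 ((m' - m) * ∑ t ∈ range T, β ^ t) := by
  induction T with
  | zero => intro b _; simp [V]
  | succ T ih =>
    intro b hb
    set S := ∑ t ∈ range T, β ^ t
    have hδ : 0 ≤ m' - m := sub_nonneg.2 hm
    have hβδS : β * ((m' - m) * S) ≤ (m' - m) * (β * S + 1) := by linarith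
    rw [geom_sum_succ, V_succ, V_succ]
    refine max_sub_max_mem_Icc ?passive ?active
    case passive =>
      obtain ⟨h₀, h₁⟩ := ih _ (mul_add_one_sub_mul_mem_Icc hb h11p h01p)
      rw [Vp_sub_Vp]
      constructor <;> linarith [mul_le_mul_of_nonneg_left h₁ hβ, mul_nonneg hβ h₀]
    case active =>
      obtain ⟨h₀, h₁⟩ :=
        mul_add_one_sub_mul_mem_Icc hb (ih p11a h11a) (ih p01a h01a)
      rw [Va_sub_Va]
      exact ⟨mul_nonneg hβ h₀, (mul_le_mul_of_nonneg_left h₁ hβ).trans hβδS⟩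

end ValueFunction

theorem value_function_lipschitz_in_subsidy
    (p01p p11p p01a p11a β : ℝ) (hβ : 0 ≤ β)
    (h1 : 0 ≤ p01p) (h1' : p01p ≤ 1) (h2 : 0 ≤ p11p) (h2' : p11p ≤ 1)
    (h3 : 0 ≤ p01a) (h3' : p01a ≤ 1) (h4 : 0 ≤ p11a) (h4' : p11a ≤ 1) :
    ∀ (T : ℕ) (b : ℝ), 0 ≤ b → b ≤ 1 → ∀ m m' : ℝ, m ≤ m' →
      0 ≤ V β m' p01p p11p p01a p11a T b - V β m p01p p11p p01a p11a T b ∧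
      V β m' p01p p11p p01a p11a T b - V β m p01p p11p p01a p11a T b
        ≤ (m' - m) * (∑ t ∈ Finset.range T, β ^ t) :=
  fun T b hb0 hb1 _ _ hm =>
    V_sub_V_mem_Icc hβ ⟨h1, h1'⟩ ⟨h2, h2'⟩ ⟨h3, h3'⟩ ⟨h4, h4'⟩ hm T b ⟨hb0, hb1⟩
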